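/- arXiv:2111.12432 — 2 statements merged into one kernel-verified Lean document; each statement's English description precedes it below -/
import Mathlib

section
/- Let n be an integer with |n| ≥ 3, α ∈ (0,1/2), κ > 1, and let w : [0,∞) → ℂ be continuous with |w(r)| ≤ M (1+|n|)^{-(κ+2)} (1+r)^{-(α+2)} for all r ≥ 0. Define I(r) = (r^{|n|}/(2|n|)) ∫_r^∞ s^{1-|n|} w(s) ds. Then there is an absolute constant C with |I(r)| ≤ C M (1+|n|)^{-(κ+4)} min{r², r^{-α}} for all r > 0. -/
/-- Bound for `I^∞_{|n|}[w](r) = (r^{|n|}/(2|n|)) ∫_r^∞ s^{1-|n|} w(s) ds` for `|n| ≥ 3`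
under the decay `|w(r)| ≤ M (1+|n|)^{-(κ+2)} (1+r)^{-(α+2)}`, with an absolute constant `C`. -/
theorem stmt5 :
    ∃ C > (0:ℝ), ∀ (n : ℤ), 3 ≤ |n| → ∀ (α κ M : ℝ), 0 < α → α < 1/2 → 1 < κ → 0 ≤ M →
      ∀ w : ℝ → ℂ, ContinuousOn w (Set.Ici 0) →
      (∀ r : ℝ, 0 ≤ r → ‖w r‖ ≤ M * (1 + |(n:ℝ)|) ^ (-(κ+2)) * (1+r) ^ (-(α+2))) →
      ∀ r : ℝ, 0 < r →
        ‖((r ^ |(n:ℝ)| / (2 * |(n:ℝ)|) : ℝ) : ℂ)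
            * ∫ s in Set.Ioi r, ((s ^ (1 - |(n:ℝ)|) : ℝ) : ℂ) * w s‖
          ≤ C * M * (1 + |(n:ℝ)|) ^ (-(κ+4)) * min (r^2) (r ^ (-α)) := by
  refine ⟨4, by norm_num, ?_⟩
  intro n hn α κ M hα hα2 hκ hM w hw hwb r hr
  set N := |(n:ℝ)| with hN
  have hN3 : (3:ℝ) ≤ N := by
    rw [hN, ← Int.cast_abs]
    exact_mod_cast hn
  have hN0 : (0:ℝ) < N := by linarith
  have h1N : (0:ℝ) < 1 + N := by linarith
  set K := M * (1 + N) ^ (-(κ+2)) * (1+r) ^ (-(α+2)) with hK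
  have hK0 : 0 ≤ K := by positivity
  have hp : (1 - N) < -1 := by linarith
  have hint : MeasureTheory.IntegrableOn (fun s : ℝ => s ^ (1 - N)) (Set.Ioi r) :=
    integrableOn_Ioi_rpow_of_lt hp hr
  have hintval : (∫ s in Set.Ioi r, s ^ (1 - N)) = r ^ (2 - N) / (N - 2) := by
    rw [integral_Ioi_rpow_of_lt hp hr, show (1-N)+1 = 2-N from by ring,
      div_eq_div_iff (by intro h; rw [sub_eq_zero] at h; linarith) (by intro h; rw [sub_eq_zero] at h; linarith)]
    ring
  -- pointwise bound
  have hbound : ∀ s ∈ Set.Ioi r, ‖((s ^ (1-N) : ℝ) : ℂ) * w s‖ ≤ K * s ^ (1-N) := by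
    intro s hs
    have hs0 : 0 < s := lt_trans hr hs
    have hsn : (0:ℝ) ≤ s ^ (1-N) := Real.rpow_nonneg hs0.le _
    rw [norm_mul, Complex.norm_real, Real.norm_eq_abs, abs_of_nonneg hsn]
    have h2 : (1+s) ^ (-(α+2)) ≤ (1+r) ^ (-(α+2)) :=
      Real.rpow_le_rpow_of_nonpos (by linarith) (by linarith [le_of_lt (Set.mem_Ioi.mp hs)]) (by linarith)
    calc s^(1-N) * ‖w s‖
        ≤ s^(1-N) * (M * (1+N)^(-(κ+2)) * (1+s)^(-(α+2))) :=
          mul_le_mul_of_nonneg_left (hwb s hs0.le) hsn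
      _ ≤ s^(1-N) * (M * (1+N)^(-(κ+2)) * (1+r)^(-(α+2))) := by
          refine mul_le_mul_of_nonneg_left (mul_le_mul_of_nonneg_left h2 ?_) hsn
          positivity
      _ = K * s^(1-N) := by rw [hK]; ring
  have h1 : ‖∫ s in Set.Ioi r, ((s ^ (1-N) : ℝ) : ℂ) * w s‖ ≤ K * (r ^ (2-N) / (N-2)) := by
    have hgint : MeasureTheory.Integrable (fun s : ℝ => K * s ^ (1-N))
        (MeasureTheory.volume.restrict (Set.Ioi r)) := hint.const_mul K
    have hae : ∀ᵐ s ∂(MeasureTheory.volume.restrict (Set.Ioi r)),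
        ‖((s ^ (1-N) : ℝ) : ℂ) * w s‖ ≤ K * s ^ (1-N) :=
      (MeasureTheory.ae_restrict_mem measurableSet_Ioi).mono fun s hs => hbound s hs
    have := MeasureTheory.norm_integral_le_of_norm_le hgint hae
    rwa [MeasureTheory.integral_const_mul K _, hintval] at this
  -- norm of the scalar
  have ha0 : (0:ℝ) ≤ r ^ N / (2*N) := div_nonneg (Real.rpow_nonneg hr.le N) (by linarith)
  rw [norm_mul, Complex.norm_real, Real.norm_eq_abs, abs_of_nonneg ha0]
  have hq0 : (0:ℝ) ≤ (1+r) ^ (-(α+2)) := Real.rpow_nonneg (by linarith) _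
  -- the min bound
  have hmin : r^2 * (1+r)^(-(α+2)) ≤ min (r^2) (r^(-α)) := by
    refine le_min ?_ ?_
    · have : (1+r)^(-(α+2)) ≤ 1 :=
        Real.rpow_le_one_of_one_le_of_nonpos (by linarith) (by linarith)
      nlinarith [sq_nonneg r]
    · have h2 : (1+r)^(-(α+2)) ≤ r^(-(α+2)) :=
        Real.rpow_le_rpow_of_nonpos hr (by linarith) (by linarith)
      calc r^2 * (1+r)^(-(α+2)) ≤ r^2 * r^(-(α+2)) := by
            exact mul_le_mul_of_nonneg_left h2 (sq_nonneg r)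
        _ = r^(2:ℝ) * r^(-(α+2)) := by rw [Real.rpow_two]
        _ = r^((2:ℝ) + -(α+2)) := (Real.rpow_add hr _ _).symm
        _ = r^(-α) := by norm_num
  have hPE : (1+N)^(-(κ+2)) = (1+N)^(-(κ+4)) * (1+N)^2 := by
    rw [← Real.rpow_two, ← Real.rpow_add h1N]
    congr 1
    ring
  have hC4 : (1+N)^2/(2*N*(N-2)) ≤ 4 := by
    rw [div_le_iff₀ (by nlinarith)]
    nlinarith
  have hab : r ^ N * r ^ (2-N) = r^2 := by
    rw [← Real.rpow_add hr, ← Real.rpow_two]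
    norm_num
  have hE0 : (0:ℝ) ≤ (1+N)^(-(κ+4)) := Real.rpow_nonneg h1N.le _
  have h2main : r ^ N / (2*N) * (K * (r ^ (2-N) / (N-2))) ≤
      4 * M * (1+N)^(-(κ+4)) * min (r^2) (r^(-α)) := by
    rw [hK, hPE]
    calc r ^ N / (2*N) * ((M * ((1+N)^(-(κ+4)) * (1+N)^2) * (1+r)^(-(α+2))) * (r ^ (2-N) / (N-2)))
        = (M * (1+N)^(-(κ+4))) * ((1+N)^2/(2*N*(N-2))) * ((r ^ N * r ^ (2-N)) * (1+r)^(-(α+2))) := by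
          have h2n : (2:ℝ)*N ≠ 0 := by positivity
          have hn2 : N - 2 ≠ 0 := by intro h; rw [sub_eq_zero] at h; linarith
          field_simp
      _ = (M * (1+N)^(-(κ+4))) * ((1+N)^2/(2*N*(N-2))) * (r^2 * (1+r)^(-(α+2))) := by rw [hab]
      _ ≤ (M * (1+N)^(-(κ+4))) * 4 * min (r^2) (r^(-α)) := by
          refine mul_le_mul (mul_le_mul_of_nonneg_left hC4 (by positivity)) hmin (by positivity) (by positivity)
      _ = 4 * M * (1+N)^(-(κ+4)) * min (r^2) (r^(-α)) := by ring
  calc r ^ N / (2*N) * ‖∫ s in Set.Ioi r, ((s ^ (1-N) : ℝ) : ℂ) * w s‖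
      ≤ r ^ N / (2*N) * (K * (r ^ (2-N) / (N-2))) := mul_le_mul_of_nonneg_left h1 ha0
    _ ≤ 4 * M * (1+N)^(-(κ+4)) * min (r^2) (r^(-α)) := h2main
end

section
/- Let K₁, K₂, K₃ ≥ 0 with K₂ < 1, and let ε = (1−K₂)²/(4K₁K₃) (with K₁, K₃ > 0). Suppose 0 ≤ σ < ε and define the map T(x) = K₁x² + K₂x + K₃σ on [0,∞). Set M = (1−K₂ − √((1−K₂)² − 4K₁K₃σ))/(2K₁). Then M is a fixed point of T, the interval [0, M] is invariant under T, and 2K₁M + K₂ < 1, so T is a contraction on [0,M] with Lipschitz constant 2K₁M + K₂ < 1. -/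
/-- The quadratic fixed-point lemma: with `T(x) = K₁x² + K₂x + K₃σ`, `K₂ < 1`,
`ε = (1−K₂)²/(4K₁K₃)`, `0 ≤ σ < ε`, and `M = (1−K₂−√((1−K₂)²−4K₁K₃σ))/(2K₁)`,
`M` is a fixed point of `T`, `[0,M]` is invariant, and `T` is a contraction on `[0,M]`
with Lipschitz constant `2K₁M + K₂ < 1`. -/
theorem stmt18 (K₁ K₂ K₃ σ ε M : ℝ) (h1 : 0 < K₁) (h2 : 0 ≤ K₂) (h3 : 0 < K₃)
    (hK2 : K₂ < 1) (hε : ε = (1 - K₂)^2 / (4*K₁*K₃)) (hσ : 0 ≤ σ) (hσε : σ < ε)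
    (hM : M = (1 - K₂ - Real.sqrt ((1 - K₂)^2 - 4*K₁*K₃*σ)) / (2*K₁)) :
    (K₁*M^2 + K₂*M + K₃*σ = M) ∧
    (∀ x ∈ Set.Icc (0:ℝ) M, K₁*x^2 + K₂*x + K₃*σ ∈ Set.Icc (0:ℝ) M) ∧
    (2*K₁*M + K₂ < 1) ∧
    (∀ x ∈ Set.Icc (0:ℝ) M, ∀ y ∈ Set.Icc (0:ℝ) M,
      |(K₁*x^2 + K₂*x + K₃*σ) - (K₁*y^2 + K₂*y + K₃*σ)| ≤ (2*K₁*M + K₂) * |x - y|) := by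
  have h4 : (0:ℝ) < 4*K₁*K₃ := by positivity
  have hσ4 : σ * (4*K₁*K₃) < (1 - K₂)^2 := (lt_div_iff₀ h4).mp (hε ▸ hσε)
  have hD : 0 < (1 - K₂)^2 - 4*K₁*K₃*σ := by nlinarith
  set s := Real.sqrt ((1 - K₂)^2 - 4*K₁*K₃*σ) with hs
  have hs2 : s^2 = (1 - K₂)^2 - 4*K₁*K₃*σ := Real.sq_sqrt hD.le
  have hspos : 0 < s := Real.sqrt_pos.mpr hD
  have hsle : s ≤ 1 - K₂ := by
    have h5 : (1 - K₂)^2 - 4*K₁*K₃*σ ≤ (1 - K₂)^2 := by nlinarith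
    calc s ≤ Real.sqrt ((1 - K₂)^2) := Real.sqrt_le_sqrt h5
    _ = 1 - K₂ := Real.sqrt_sq (by linarith)
  have hM' : 2*K₁*M = 1 - K₂ - s := by
    rw [hM]; field_simp
  have hMnn : 0 ≤ M := by
    have : 0 ≤ 2*K₁*M := by linarith
    nlinarith
  have hfix : K₁*M^2 + K₂*M + K₃*σ = M := by
    have h6 : 4*K₁*(K₁*M^2 + K₂*M + K₃*σ - M) = 0 := by
      linear_combination (2*K₁*M - (1-K₂) - s) * hM' + hs2
    have hne : (4*K₁ : ℝ) ≠ 0 := by positivity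
    have h7 := (mul_eq_zero.mp h6).resolve_left hne
    linarith
  have hlt : 2*K₁*M + K₂ < 1 := by linarith
  refine ⟨hfix, ?_, hlt, ?_⟩
  · rintro x ⟨hx0, hxM⟩
    refine ⟨by positivity, ?_⟩
    have hprod : 0 ≤ (M - x) * (K₁*(M+x) + K₂) :=
      mul_nonneg (by linarith) (by positivity)
    nlinarith [hfix]
  · rintro x ⟨hx0, hxM⟩ y ⟨hy0, hyM⟩
    have key : (K₁*x^2 + K₂*x + K₃*σ) - (K₁*y^2 + K₂*y + K₃*σ)
        = (K₁*(x+y) + K₂) * (x - y) := by ring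
    rw [key, abs_mul, abs_of_nonneg (by positivity : 0 ≤ K₁*(x+y) + K₂)]
    have hle : K₁*(x+y) + K₂ ≤ 2*K₁*M + K₂ := by nlinarith
    exact mul_le_mul_of_nonneg_right hle (abs_nonneg _)
end
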